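/- arXiv:2508.10495 — 3 statements merged into one kernel-verified Lean document; each statement's English description precedes it below -/
import Mathlib

section
/- Let W_f ∈ ℂ with W_f ≠ 0, and let N_R + i N_I be a circularly symmetric complex Gaussian random variable where N_R, N_I are independent N(0, σ²). Set W_Y = W_f + (N_R + i N_I) e^{i arg(W_f)} and q = |W_f|²/(2σ²). Then for any ε > 0, P( | |W_Y|/|W_f| − 1 | > ε ) ≤ exp(−(ε²/16) q) + exp(−(ε/2) q). -/
/-!
After rotating by the phase of `W_f`, `|W_Y|² = (|W_f| + N_R)² + N_I²`. A relative deviation of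
more than `ε` forces `|N_R| ≥ ε|W_f|/4` or `N_I² ≥ (ε/2)|W_f|²`: going down needs
`N_R < -ε|W_f|`, and going up with `N_I² < (ε/2)|W_f|²` needs `|N_R| > ε|W_f|/4`, since
`(1 + ε/4)² + ε/2 ≤ (1 + ε)²`. Each of the two events has probability at most `exp(-t²/2σ²)`:
on `[t, ∞)` the `N(0, σ²)` density is at most `exp(-t²/2σ²)` times the `N(t, σ²)` density, which
gives mass `1/2` to `[t, ∞)`, and the same holds on `(-∞, -t]` by symmetry.
-/

open MeasureTheory ProbabilityTheory Real Complex

open scoped NNReal ENNReal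

namespace ProbabilityTheory

lemma gaussianReal_Ici_self (m : ℝ) {v : ℝ≥0} (hv : v ≠ 0) :
    gaussianReal m v (Set.Ici m) = 1 / 2 := by
  set P := gaussianReal m v
  have hsymm : P (Set.Iic m) = P (Set.Ici m) := by
    have hreflect : P.map (2 * m - ·) = P := by
      rw [gaussianReal_map_const_sub, two_mul, add_sub_cancel_right]
    conv_lhs => rw [← hreflect]
    rw [Measure.map_apply (by fun_prop) measurableSet_Iic]
    congr 1
    ext x
    simp only [Set.mem_preimage, Set.mem_Iic, Set.mem_Ici]
    constructor <;> intro h <;> linarith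
  have hatom : P (Set.Ici m ∩ Set.Iic m) = 0 := by
    rw [Set.Ici_inter_Iic, Set.Icc_self]
    exact gaussianReal_absolutelyContinuous m hv Real.volume_singleton
  have hsum := measure_union_add_inter (μ := P) (Set.Ici m) (measurableSet_Iic (a := m))
  rw [Set.Ici_union_Iic, measure_univ, hatom, add_zero, hsymm] at hsum
  rw [ENNReal.eq_div_iff two_ne_zero ENNReal.ofNat_ne_top, two_mul, hsum]

lemma gaussianPDFReal_le_exp_mul_gaussianPDFReal {v : ℝ≥0} {t x : ℝ} (ht : 0 ≤ t)
    (hx : t ≤ x) :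
    gaussianPDFReal 0 v x ≤ rexp (-t ^ 2 / (2 * v)) * gaussianPDFReal t v x := by
  have hexp : -(x - 0) ^ 2 / (2 * v) ≤ -t ^ 2 / (2 * v) + -(x - t) ^ 2 / (2 * v) := by
    rw [← add_div]
    apply div_le_div_of_nonneg_right _ (by positivity)
    nlinarith [mul_nonneg ht (sub_nonneg.mpr hx)]
  simp only [gaussianPDFReal]
  calc (√(2 * π * v))⁻¹ * rexp (-(x - 0) ^ 2 / (2 * v))
      ≤ (√(2 * π * v))⁻¹ * (rexp (-t ^ 2 / (2 * v)) * rexp (-(x - t) ^ 2 / (2 * v))) := by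
        rw [← Real.exp_add]; gcongr
    _ = _ := by ring

lemma gaussianReal_Ici_le {v : ℝ≥0} (hv : v ≠ 0) {t : ℝ} (ht : 0 ≤ t) :
    gaussianReal 0 v (Set.Ici t) ≤ ENNReal.ofReal (rexp (-t ^ 2 / (2 * v)) / 2) := by
  calc gaussianReal 0 v (Set.Ici t)
      = ∫⁻ x in Set.Ici t, gaussianPDF 0 v x := gaussianReal_apply 0 hv _
    _ ≤ ∫⁻ x in Set.Ici t, ENNReal.ofReal (rexp (-t ^ 2 / (2 * v))) * gaussianPDF t v x := by
        refine setLIntegral_mono (by fun_prop) fun x hx => ?_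
        rw [gaussianPDF, gaussianPDF, ← ENNReal.ofReal_mul (by positivity)]
        exact ENNReal.ofReal_le_ofReal (gaussianPDFReal_le_exp_mul_gaussianPDFReal ht hx)
    _ = ENNReal.ofReal (rexp (-t ^ 2 / (2 * v))) * gaussianReal t v (Set.Ici t) := by
        rw [lintegral_const_mul _ (measurable_gaussianPDF t v), gaussianReal_apply t hv]
    _ = ENNReal.ofReal (rexp (-t ^ 2 / (2 * v)) / 2) := by
        rw [gaussianReal_Ici_self t hv, ENNReal.ofReal_div_of_pos two_pos, ENNReal.ofReal_ofNat,
          mul_one_div]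

lemma gaussianReal_abs_ge_le {v : ℝ≥0} (hv : v ≠ 0) {t : ℝ} (ht : 0 ≤ t) :
    gaussianReal 0 v {x | t ≤ |x|} ≤ ENNReal.ofReal (rexp (-t ^ 2 / (2 * v))) := by
  have hsplit : {x : ℝ | t ≤ |x|} = Set.Ici t ∪ (-·) ⁻¹' Set.Ici t := by
    ext x
    simp only [Set.mem_ofPred_eq, Set.mem_union, Set.mem_Ici, Set.mem_preimage, le_abs', le_neg]
    tauto
  have hneg : gaussianReal 0 v ((-·) ⁻¹' Set.Ici t) = gaussianReal 0 v (Set.Ici t) := by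
    rw [← Measure.map_apply measurable_neg measurableSet_Ici, gaussianReal_map_neg, neg_zero]
  calc gaussianReal 0 v {x | t ≤ |x|}
      ≤ gaussianReal 0 v (Set.Ici t) + gaussianReal 0 v ((-·) ⁻¹' Set.Ici t) :=
        hsplit ▸ measure_union_le _ _
    _ ≤ ENNReal.ofReal (rexp (-t ^ 2 / (2 * v)) / 2)
          + ENNReal.ofReal (rexp (-t ^ 2 / (2 * v)) / 2) := by
        rw [hneg]; gcongr <;> exact gaussianReal_Ici_le hv ht
    _ = ENNReal.ofReal (rexp (-t ^ 2 / (2 * v))) := by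
        rw [← ENNReal.ofReal_add (by positivity) (by positivity), add_halves]

lemma measure_abs_ge_le_of_map_eq_gaussianReal {Ω : Type*} [MeasurableSpace Ω] {μ : Measure Ω}
    {X : Ω → ℝ} {v : ℝ≥0} (hv : v ≠ 0) (hX : μ.map X = gaussianReal 0 v) {t : ℝ}
    (ht : 0 ≤ t) :
    μ {ω | t ≤ |X ω|} ≤ ENNReal.ofReal (rexp (-t ^ 2 / (2 * v))) := by
  have hXm : AEMeasurable X μ := .of_map_ne_zero (by rw [hX]; exact IsProbabilityMeasure.ne_zero _)
  change μ (X ⁻¹' {x | t ≤ |x|}) ≤ _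
  rw [← Measure.map_apply_of_aemeasurable hXm
    (measurableSet_le measurable_const measurable_abs), hX]
  exact gaussianReal_abs_ge_le hv ht

end ProbabilityTheory

lemma Complex.norm_add_mul_exp_arg_mul_I (w : ℂ) (x y : ℝ) :
    ‖w + (x + y * I) * exp (arg w * I)‖ = √((‖w‖ + x) ^ 2 + y ^ 2) := by
  have hw : w + (x + y * I) * exp (arg w * I)
      = ((‖w‖ + x : ℝ) + y * I) * exp (arg w * I) := by
    push_cast
    linear_combination (-1 : ℂ) * norm_mul_exp_arg_mul_I w
  rw [hw, norm_mul, norm_exp_ofReal_mul_I, mul_one, norm_add_mul_I]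

lemma le_abs_or_le_abs_of_lt_abs_sqrt_div_sub_one {a ε x y : ℝ} (ha : 0 < a) (hε : 0 < ε)
    (h : ε < |√((a + x) ^ 2 + y ^ 2) / a - 1|) :
    ε * a / 4 ≤ |x| ∨ √(ε / 2) * a ≤ |y| := by
  rcases lt_abs.mp h with hup | hlow
  · by_contra! hsmall
    obtain ⟨hx, hy⟩ := hsmall
    have hr : ((1 + ε) * a) ^ 2 < (a + x) ^ 2 + y ^ 2 := by
      rw [← Real.lt_sqrt (by positivity)]
      linarith [(lt_div_iff₀ ha).mp (by linarith : 1 + ε < √((a + x) ^ 2 + y ^ 2) / a)]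
    have hy2 : y ^ 2 < ε / 2 * a ^ 2 := by
      have := pow_lt_pow_left₀ hy (abs_nonneg y) two_ne_zero
      rwa [sq_abs, mul_pow, Real.sq_sqrt (by positivity)] at this
    have hx2 : (a + x) ^ 2 ≤ (a + |x|) ^ 2 := by
      nlinarith [abs_nonneg x, le_abs_self x, neg_abs_le x]
    nlinarith [abs_nonneg x]
  · left
    have hr : √((a + x) ^ 2 + y ^ 2) < (1 - ε) * a :=
      (div_lt_iff₀ ha).mp (by linarith)
    have hax : a + x ≤ √((a + x) ^ 2 + y ^ 2) :=
      Real.le_sqrt_of_sq_le (le_add_of_nonneg_right (sq_nonneg y))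
    nlinarith [neg_abs_le x]

theorem stmt5_general {Ω : Type*} [MeasurableSpace Ω] (μ : Measure Ω)
    (NR NI : Ω → ℝ) (σ : ℝ) (hσ : 0 < σ)
    (hNR : Measure.map NR μ = gaussianReal 0 (Real.toNNReal (σ^2)))
    (hNI : Measure.map NI μ = gaussianReal 0 (Real.toNNReal (σ^2)))
    (Wf : ℂ) (hWf : Wf ≠ 0)
    (WY : Ω → ℂ)
    (hWY : ∀ ω, WY ω = Wf + ((NR ω : ℂ) + (NI ω : ℂ) * Complex.I)
      * Complex.exp ((Complex.arg Wf : ℂ) * Complex.I))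
    (q : ℝ) (hq : q = (‖Wf‖)^2 / (2 * σ^2))
    (ε : ℝ) (hε : 0 < ε) :
    μ {ω | |‖WY ω‖ / ‖Wf‖ - 1| > ε}
      ≤ ENNReal.ofReal (Real.exp (-(ε^2/16) * q) + Real.exp (-(ε/2) * q)) := by
  have ha : 0 < ‖Wf‖ := norm_pos_iff.mpr hWf
  have hv : (σ ^ 2).toNNReal ≠ 0 := by simpa using hσ.ne'
  have hvσ : ((σ ^ 2).toNNReal : ℝ) = σ ^ 2 := Real.coe_toNNReal _ (sq_nonneg σ)
  calc μ {ω | |‖WY ω‖ / ‖Wf‖ - 1| > ε}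
      ≤ μ ({ω | ε * ‖Wf‖ / 4 ≤ |NR ω|} ∪ {ω | √(ε / 2) * ‖Wf‖ ≤ |NI ω|}) := by
        refine measure_mono fun ω hω => ?_
        rw [Set.mem_ofPred_eq, hWY, norm_add_mul_exp_arg_mul_I] at hω
        exact le_abs_or_le_abs_of_lt_abs_sqrt_div_sub_one ha hε hω
    _ ≤ μ {ω | ε * ‖Wf‖ / 4 ≤ |NR ω|} + μ {ω | √(ε / 2) * ‖Wf‖ ≤ |NI ω|} :=
        measure_union_le _ _
    _ ≤ ENNReal.ofReal (rexp (-(ε * ‖Wf‖ / 4) ^ 2 / (2 * (σ ^ 2).toNNReal)))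
          + ENNReal.ofReal (rexp (-(√(ε / 2) * ‖Wf‖) ^ 2 / (2 * (σ ^ 2).toNNReal))) := by
        gcongr
        · exact measure_abs_ge_le_of_map_eq_gaussianReal hv hNR (by positivity)
        · exact measure_abs_ge_le_of_map_eq_gaussianReal hv hNI (by positivity)
    _ = ENNReal.ofReal (Real.exp (-(ε^2/16) * q) + Real.exp (-(ε/2) * q)) := by
        rw [← ENNReal.ofReal_add (by positivity) (by positivity), hvσ, hq, mul_pow,
          Real.sq_sqrt (by positivity : 0 ≤ ε / 2)]
        congr 3
        · field_simp
          ring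
        · field_simp

theorem stmt5 {Ω : Type*} [MeasurableSpace Ω] (μ : Measure Ω) [IsProbabilityMeasure μ]
    (NR NI : Ω → ℝ) (σ : ℝ) (hσ : 0 < σ)
    (hNR : Measure.map NR μ = gaussianReal 0 (Real.toNNReal (σ^2)))
    (hNI : Measure.map NI μ = gaussianReal 0 (Real.toNNReal (σ^2)))
    (hindep : IndepFun NR NI μ)
    (Wf : ℂ) (hWf : Wf ≠ 0)
    (WY : Ω → ℂ)
    (hWY : ∀ ω, WY ω = Wf + ((NR ω : ℂ) + (NI ω : ℂ) * Complex.I)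
      * Complex.exp ((Complex.arg Wf : ℂ) * Complex.I))
    (q : ℝ) (hq : q = (‖Wf‖)^2 / (2 * σ^2))
    (ε : ℝ) (hε : 0 < ε) :
    μ {ω | |‖WY ω‖ / ‖Wf‖ - 1| > ε}
      ≤ ENNReal.ofReal (Real.exp (-(ε^2/16) * q) + Real.exp (-(ε/2) * q)) :=
  stmt5_general μ NR NI σ hσ hNR hNI Wf hWf WY hWY q hq ε hε
end

section
/- For z ∈ [0, 1) and x, y ∈ ℝ, Σ_{k=0}^∞ z^k L_k(x) L_k(y) = (1 − z)^{−1} exp(−z(x+y)/(1−z)) I₀(2√(z x y)/(1−z)), where L_k are the Laguerre polynomials and I₀ is the modified Bessel function of the first kind of order zero (Hardy–Hille formula). -/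
/-!
Expanding both Laguerre polynomials and using the binomial identity
`C(k,i) C(k,j) = ∑ₘ C(i,m) C(j,m) C(k+m,i+j)` writes `L_k(x) L_k(y)` as a finite sum
`∑_{a,b,m} c_{a,b,m} C(k+m, a+b+2m)` with `c_{a,b,m} = (-x)^a (-y)^b (xy)^m / (a! b! m!²)`.
Summing over `k` first, `∑ₖ C(k+m, a+b+2m) zᵏ = z^(a+b+m) / (1-z)^(a+b+2m+1)` turns the
`(a,b,m)` term into `(1-z)⁻¹` times the `a`-th and `b`-th terms of the exponential series at
`-zx/(1-z)` and `-zy/(1-z)` and the `m`-th term of the series of `I₀(2√(zxy)/(1-z))`.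
For `0 ≤ z < 1` the family indexed by `(a,b,m,k)` is absolutely summable (replacing `x, y` by
`-|x|, -|y|` makes every term nonnegative and gives the same absolute values), which justifies
summing over `k` first.
-/

open Real

/-- The modified Bessel function of the first kind of order zero. -/
noncomputable def I0 (x : ℝ) : ℝ := ∑' k : ℕ, (x^2/4)^k / ((Nat.factorial k : ℝ))^2

/-- The Laguerre polynomial `L_k(x) = Σ_{j=0}^k C(k,j) (−x)^j / j!`. -/
noncomputable def laguerre (k : ℕ) (x : ℝ) : ℝ :=
  ∑ j ∈ Finset.range (k + 1), (Nat.choose k j : ℝ) * (-x)^j / (Nat.factorial j : ℝ)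

open Finset
open scoped Nat

namespace Nat

theorem sum_range_choose_mul_choose_add (p q c : ℕ) :
    ∑ r ∈ range (p + 1), p.choose r * q.choose (c + r) = (p + q).choose (p + c) := by
  rw [add_choose_eq, Finset.Nat.sum_antidiagonal_eq_sum_range_succ_mk, succ_eq_add_one,
    eventually_constant_sum (N := p + 1) (n := p + c + 1)
      (fun u hu => by simp [choose_eq_zero_of_lt hu]) (by omega),
    ← sum_range_reflect]
  refine sum_congr rfl fun r hr => ?_
  have hr : r ≤ p := mem_range_succ_iff.mp hr
  rw [add_tsub_cancel_right, choose_symm hr]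
  congr 2
  omega

theorem sum_range_choose_mul_choose_mul_choose (i s t : ℕ) :
    ∑ m ∈ range (i + 1), i.choose m * (s + t).choose m * m.choose t
      = i.choose t * (i + s).choose s := by
  rcases lt_or_ge i t with hit | hti
  · rw [choose_eq_zero_of_lt hit, zero_mul]
    refine sum_eq_zero fun m hm => ?_
    rw [choose_eq_zero_of_lt (n := m) (by grind), mul_zero]
  obtain ⟨p, rfl⟩ := Nat.exists_eq_add_of_le hti
  have hlow : ∑ m ∈ range t, (t + p).choose m * (s + t).choose m * m.choose t = 0 :=
    sum_eq_zero fun m hm => by rw [choose_eq_zero_of_lt (mem_range.mp hm), mul_zero]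
  calc ∑ m ∈ range (t + p + 1), (t + p).choose m * (s + t).choose m * m.choose t
      = ∑ r ∈ range (p + 1),
          (t + p).choose (t + r) * (t + r).choose t * (s + t).choose (t + r) := by
        rw [add_assoc, sum_range_add, hlow, zero_add]
        exact sum_congr rfl fun r _ => by ring
    _ = (t + p).choose t * ∑ r ∈ range (p + 1), p.choose r * (s + t).choose (t + r) := by
        rw [mul_sum]
        refine sum_congr rfl fun r _ => ?_
        rw [choose_mul (Nat.le_add_right t r)]
        simp only [Nat.add_sub_cancel_left, mul_assoc]
    _ = (t + p).choose t * (t + p + s).choose s := by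
        rw [sum_range_choose_mul_choose_add, ← choose_symm_add]
        congr 2 <;> omega

theorem choose_add_eq_sum_antidiagonal (k i : ℕ) {m j : ℕ} (hmj : m ≤ j) :
    (k + m).choose (i + j) = ∑ p ∈ antidiagonal j, k.choose (i + p.1) * m.choose p.2 := by
  rw [add_choose_eq, Finset.Nat.sum_antidiagonal_eq_sum_range_succ_mk,
    Finset.Nat.sum_antidiagonal_eq_sum_range_succ_mk, succ_eq_add_one, succ_eq_add_one,
    add_assoc, sum_range_add,
    sum_eq_zero fun v hv => by rw [choose_eq_zero_of_lt (n := m) (by grind), mul_zero],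
    zero_add]
  refine sum_congr rfl fun s _ => ?_
  congr 2
  omega

theorem choose_mul_choose_eq_sum (k i j : ℕ) :
    k.choose i * k.choose j
      = ∑ m ∈ range (i + 1), i.choose m * j.choose m * (k + m).choose (i + j) := by
  symm
  calc ∑ m ∈ range (i + 1), i.choose m * j.choose m * (k + m).choose (i + j)
      = ∑ m ∈ range (i + 1), ∑ p ∈ antidiagonal j,
          k.choose (i + p.1) * (i.choose m * (p.1 + p.2).choose m * m.choose p.2) := by
        refine sum_congr rfl fun m _ => ?_
        rcases lt_or_ge j m with hjm | hmj
        · rw [choose_eq_zero_of_lt hjm, mul_zero, zero_mul]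
          refine (sum_eq_zero fun p hp => ?_).symm
          rw [mem_antidiagonal.mp hp, choose_eq_zero_of_lt hjm, mul_zero, zero_mul, mul_zero]
        · rw [choose_add_eq_sum_antidiagonal k i hmj, mul_sum]
          refine sum_congr rfl fun p hp => ?_
          rw [mem_antidiagonal.mp hp]
          ring
    _ = ∑ p ∈ antidiagonal j, k.choose (i + p.1) * (i.choose p.2 * (i + p.1).choose p.1) := by
        rw [sum_comm]
        simp only [← mul_sum, sum_range_choose_mul_choose_mul_choose]
    _ = ∑ p ∈ antidiagonal j, k.choose i * ((k - i).choose p.1 * i.choose p.2) := by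
        refine sum_congr rfl fun p _ => ?_
        have h := choose_mul (n := k) (Nat.le_add_right i p.1)
        rw [Nat.add_sub_cancel_left] at h
        rw [← choose_symm_add, mul_comm (i.choose p.2), ← mul_assoc, h]
        ring
    _ = k.choose i * k.choose j := by
        rw [← mul_sum, ← add_choose_eq]
        rcases lt_or_ge k i with hki | hik
        · rw [choose_eq_zero_of_lt hki, zero_mul, zero_mul]
        · rw [Nat.sub_add_cancel hik]

end Nat

theorem hasSum_choose_add_mul_geometric {𝕜 : Type*} [NormedDivisionRing 𝕜] {z : 𝕜}
    (hz : ‖z‖ < 1) (m d : ℕ) :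
    HasSum (fun k : ℕ => ((k + m).choose (m + d) : 𝕜) * z ^ k)
      (z ^ d / (1 - z) ^ (m + d + 1)) := by
  refine (hasSum_nat_add_iff' d).mp ?_
  rw [sum_eq_zero fun k hk => by
    rw [Nat.choose_eq_zero_of_lt (by simp at hk; omega), Nat.cast_zero, zero_mul], sub_zero,
    ← mul_one_div]
  convert (hasSum_choose_mul_geometric_of_norm_lt_one (m + d) hz).mul_left (z ^ d) using 2 with k
  · rfl
  rw [show k + d + m = k + (m + d) by omega, pow_add, ← mul_assoc, ← mul_assoc,
    ← (Nat.cast_commute _ (z ^ d)).eq, mul_assoc, mul_assoc, pow_mul_comm]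

theorem summable_norm_pow_div_factorial (u : ℝ) :
    Summable fun n : ℕ => ‖u ^ n / (n ! : ℝ)‖ :=
  summable_norm_iff.mpr (Real.summable_pow_div_factorial u)

theorem summable_norm_pow_div_factorial_sq (w : ℝ) :
    Summable fun n : ℕ => ‖w ^ n / (n ! : ℝ) ^ 2‖ := by
  refine (summable_norm_iff.mpr (Real.summable_pow_div_factorial w)).of_nonneg_of_le
    (fun _ => norm_nonneg _) fun n => ?_
  rw [norm_div, norm_div, norm_pow, norm_pow, Real.norm_natCast]
  have h1 : (1 : ℝ) ≤ n ! := by exact_mod_cast n.factorial_pos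
  gcongr
  nlinarith

noncomputable def laguerreProductTerm (k : ℕ) (x y : ℝ) (q : (ℕ × ℕ) × ℕ) : ℝ :=
  (q.1.1.choose q.2 * q.1.2.choose q.2 * (k + q.2).choose (q.1.1 + q.1.2) : ℕ)
    * ((-x) ^ q.1.1 * (-y) ^ q.1.2 / (q.1.1 ! * q.1.2 !))

theorem laguerreProductTerm_eq_zero {k i j m : ℕ} (x y : ℝ)
    (h : i < m ∨ j < m ∨ k + m < i + j) :
    laguerreProductTerm k x y ((i, j), m) = 0 := by
  have : i.choose m * j.choose m * (k + m).choose (i + j) = 0 := by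
    rcases h with h | h | h <;> simp [Nat.choose_eq_zero_of_lt h]
  simp only [laguerreProductTerm, this, Nat.cast_zero, zero_mul]

theorem laguerre_mul_laguerre_eq_tsum (k : ℕ) (x y : ℝ) :
    laguerre k x * laguerre k y = ∑' q, laguerreProductTerm k x y q := calc
  laguerre k x * laguerre k y
      = ∑ i ∈ range (k + 1), ∑ j ∈ range (k + 1),
          (k.choose i * k.choose j : ℕ) * ((-x) ^ i * (-y) ^ j / (i ! * j !)) := by
        simp only [laguerre, sum_mul_sum]
        refine sum_congr rfl fun i _ => sum_congr rfl fun j _ => ?_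
        push_cast
        ring
    _ = ∑ i ∈ range (k + 1), ∑ j ∈ range (k + 1), ∑ m ∈ range (k + 1),
          laguerreProductTerm k x y ((i, j), m) := by
        refine sum_congr rfl fun i hi => sum_congr rfl fun j _ => ?_
        rw [Nat.choose_mul_choose_eq_sum, Nat.cast_sum, sum_mul]
        refine sum_subset (range_subset_range.mpr (by simpa using hi)) fun m _ hm => ?_
        exact laguerreProductTerm_eq_zero x y (Or.inl (by simpa using hm))
    _ = ∑' q, laguerreProductTerm k x y q := by
        rw [tsum_eq_sum (s := (range (k + 1) ×ˢ range (k + 1)) ×ˢ range (k + 1)), sum_product,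
          sum_product]
        rintro ⟨⟨i, j⟩, m⟩ hq
        simp only [mem_product, mem_range] at hq
        exact laguerreProductTerm_eq_zero x y (by omega)

noncomputable def hardyHilleCoeff (x y : ℝ) (p : (ℕ × ℕ) × ℕ) : ℝ :=
  (-x) ^ p.1.1 * (-y) ^ p.1.2 * (x * y) ^ p.2 / (p.1.1 ! * p.1.2 ! * (p.2 ! : ℝ) ^ 2)

theorem laguerreProductTerm_add (k : ℕ) (x y : ℝ) (a b m : ℕ) :
    laguerreProductTerm k x y ((a + m, b + m), m)
      = hardyHilleCoeff x y ((a, b), m) * ((k + m).choose (a + b + 2 * m) : ℝ) := by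
  have hxy : (-x) ^ m * (-y) ^ m = (x * y) ^ m := by rw [← mul_pow, neg_mul_neg]
  simp only [laguerreProductTerm, hardyHilleCoeff]
  rw [show a + m + (b + m) = a + b + 2 * m by ring, ← Nat.choose_symm_add,
    ← Nat.choose_symm_add]
  push_cast
  rw [Nat.cast_add_choose, Nat.cast_add_choose, pow_add, pow_add, ← hxy]
  field_simp

theorem laguerre_mul_laguerre (k : ℕ) (x y : ℝ) :
    laguerre k x * laguerre k y
      = ∑' p, hardyHilleCoeff x y p * ((k + p.2).choose (p.1.1 + p.1.2 + 2 * p.2) : ℝ) := by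
  have he :
      Function.Injective fun p : (ℕ × ℕ) × ℕ => ((p.1.1 + p.2, p.1.2 + p.2), p.2) := by
    rintro ⟨⟨a, b⟩, m⟩ ⟨⟨a', b'⟩, m'⟩ h
    simp only [Prod.mk.injEq] at h
    grind
  rw [laguerre_mul_laguerre_eq_tsum, ← he.tsum_eq]
  · exact tsum_congr fun ⟨⟨a, b⟩, m⟩ => laguerreProductTerm_add k x y a b m
  · rintro ⟨⟨i, j⟩, m⟩ hq
    have hm : m ≤ i ∧ m ≤ j := by
      by_contra h
      exact hq (laguerreProductTerm_eq_zero x y (by omega))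
    exact ⟨((i - m, j - m), m), by simp [Nat.sub_add_cancel hm.1, Nat.sub_add_cancel hm.2]⟩

noncomputable def hardyHilleTerm (z x y : ℝ) (p : (ℕ × ℕ) × ℕ) : ℝ :=
  (1 - z)⁻¹ * ((-(z * x / (1 - z))) ^ p.1.1 / p.1.1 !) * ((-(z * y / (1 - z))) ^ p.1.2 / p.1.2 !)
    * ((z * x * y / (1 - z) ^ 2) ^ p.2 / (p.2 ! : ℝ) ^ 2)

theorem hardyHilleTerm_eq (z x y : ℝ) (a b m : ℕ) :
    hardyHilleTerm z x y ((a, b), m)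
      = hardyHilleCoeff x y ((a, b), m) * (z ^ (a + b + m) / (1 - z) ^ (m + (a + b + m) + 1)) := by
  simp only [hardyHilleTerm, hardyHilleCoeff, div_pow, neg_pow (z * _ / _)]
  generalize 1 - z = w
  ring

theorem hasSum_hardyHilleCoeff_mul_choose {z : ℝ} (hz : |z| < 1) (x y : ℝ)
    (p : (ℕ × ℕ) × ℕ) :
    HasSum
      (fun k => hardyHilleCoeff x y p * ((k + p.2).choose (p.1.1 + p.1.2 + 2 * p.2) : ℝ) * z ^ k)
      (hardyHilleTerm z x y p) := by
  obtain ⟨⟨a, b⟩, m⟩ := p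
  have h := (hasSum_choose_add_mul_geometric (𝕜 := ℝ) (by rwa [Real.norm_eq_abs]) m
    (a + b + m)).mul_left (hardyHilleCoeff x y ((a, b), m))
  rw [hardyHilleTerm_eq, show a + b + 2 * m = m + (a + b + m) by ring]
  simpa only [mul_assoc] using h

theorem summable_norm_hardyHilleTerm (z x y : ℝ) :
    Summable fun p => ‖hardyHilleTerm z x y p‖ := by
  have h := (((summable_norm_pow_div_factorial (-(z * x / (1 - z)))).mul_norm
    (summable_norm_pow_div_factorial (-(z * y / (1 - z))))).mul_norm
    (summable_norm_pow_div_factorial_sq (z * x * y / (1 - z) ^ 2))).mul_left ‖(1 - z)⁻¹‖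
  refine h.congr fun p => ?_
  simp only [hardyHilleTerm, norm_mul]
  ring

theorem norm_hardyHilleCoeff (x y : ℝ) (p : (ℕ × ℕ) × ℕ) :
    ‖hardyHilleCoeff x y p‖ = hardyHilleCoeff (-|x|) (-|y|) p := by
  simp only [hardyHilleCoeff, norm_div, norm_mul, norm_pow, neg_neg, Real.norm_eq_abs, abs_neg,
    Nat.abs_cast, neg_mul_neg]

theorem summable_hardyHilleCoeff_mul_choose {z : ℝ} (hz0 : 0 ≤ z) (hz1 : z < 1) (x y : ℝ) :
    Summable fun q : ((ℕ × ℕ) × ℕ) × ℕ =>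
      hardyHilleCoeff x y q.1 * ((q.2 + q.1.2).choose (q.1.1.1 + q.1.1.2 + 2 * q.1.2) : ℝ)
        * z ^ q.2 := by
  have hfiber (p : (ℕ × ℕ) × ℕ) : HasSum
      (fun k => ‖hardyHilleCoeff x y p * ((k + p.2).choose (p.1.1 + p.1.2 + 2 * p.2) : ℝ)
        * z ^ k‖)
      (hardyHilleTerm z (-|x|) (-|y|) p) := by
    simpa only [norm_mul, norm_pow, norm_hardyHilleCoeff, Real.norm_natCast,
      Real.norm_of_nonneg hz0]
      using hasSum_hardyHilleCoeff_mul_choose (by rwa [abs_of_nonneg hz0]) (-|x|) (-|y|) p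
  refine Summable.of_norm ((summable_prod_of_nonneg fun _ => norm_nonneg _).mpr
    ⟨fun p => (hfiber p).summable, ?_⟩)
  simpa only [(hfiber _).tsum_eq] using (summable_norm_hardyHilleTerm z (-|x|) (-|y|)).of_norm

theorem tsum_hardyHilleTerm {z x y : ℝ} (hzxy : 0 ≤ z * x * y) :
    ∑' p, hardyHilleTerm z x y p
      = (1 - z)⁻¹ * Real.exp (-(z * (x + y)) / (1 - z))
          * I0 (2 * Real.sqrt (z * x * y) / (1 - z)) := by
  have hexp (u : ℝ) : Real.exp u = ∑' n : ℕ, u ^ n / n ! := by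
    rw [Real.exp_eq_exp_ℝ, NormedSpace.exp_eq_tsum_div]
  have hI0 : I0 (2 * Real.sqrt (z * x * y) / (1 - z))
      = ∑' m : ℕ, (z * x * y / (1 - z) ^ 2) ^ m / (m ! : ℝ) ^ 2 := by
    rw [I0, div_pow, mul_pow, Real.sq_sqrt hzxy]
    ring_nf
  rw [show -(z * (x + y)) / (1 - z) = -(z * x / (1 - z)) + -(z * y / (1 - z)) by ring,
    Real.exp_add, hexp, hexp, hI0, mul_assoc,
    tsum_mul_tsum_of_summable_norm (summable_norm_pow_div_factorial _)
      (summable_norm_pow_div_factorial _),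
    tsum_mul_tsum_of_summable_norm ((summable_norm_pow_div_factorial _).mul_norm
      (summable_norm_pow_div_factorial _)) (summable_norm_pow_div_factorial_sq _),
    ← tsum_mul_left]
  refine tsum_congr fun p => ?_
  simp only [hardyHilleTerm]
  ring

/-- Hardy–Hille formula. -/
theorem stmt10 (z x y : ℝ) (hz0 : 0 ≤ z) (hz1 : z < 1) (hx : 0 ≤ x) (hy : 0 ≤ y) :
    ∑' k : ℕ, z^k * laguerre k x * laguerre k y
      = (1 - z)⁻¹ * Real.exp (-(z * (x + y)) / (1 - z))
          * I0 (2 * Real.sqrt (z * x * y) / (1 - z)) := by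
  have hz : |z| < 1 := by rwa [abs_of_nonneg hz0]
  calc ∑' k : ℕ, z ^ k * laguerre k x * laguerre k y
      = ∑' (k : ℕ) (p : (ℕ × ℕ) × ℕ),
          hardyHilleCoeff x y p * ((k + p.2).choose (p.1.1 + p.1.2 + 2 * p.2) : ℝ) * z ^ k := by
        refine tsum_congr fun k => ?_
        rw [mul_assoc, laguerre_mul_laguerre, ← tsum_mul_left]
        exact tsum_congr fun p => by ring
    _ = ∑' p, hardyHilleTerm z x y p :=
        ((summable_hardyHilleCoeff_mul_choose hz0 hz1 x y).tsum_comm).trans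
          (tsum_congr fun p => (hasSum_hardyHilleCoeff_mul_choose hz x y p).tsum_eq)
    _ = _ := tsum_hardyHilleTerm (by positivity)
end

section
/- For any a ≥ 0 and b > a, ∫₀^∞ r² I₀(a r) K₀(b r) dr = (π/2) b^{−3} · ₂F₁(3/2, 3/2; 1; a²/b²), where ₂F₁ is the Gauss hypergeometric function, I₀ the modified Bessel function of the first kind, and K₀ the modified Bessel function of the second kind of order zero. -/
open Real MeasureTheory

/-- The modified Bessel function of the second kind of order zero. -/
noncomputable def K0 (x : ℝ) : ℝ := ∫ t in Set.Ioi (0:ℝ), Real.exp (-(x * Real.cosh t))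

/-- The Gauss hypergeometric function `₂F₁(a, b; c; x)`. -/
noncomputable def twoF1 (a b c x : ℝ) : ℝ :=
  (Real.Gamma c / (Real.Gamma a * Real.Gamma b)) *
    ∑' k : ℕ, Real.Gamma (k + a) * Real.Gamma (k + b) / Real.Gamma (k + c)
      * x^k / (Nat.factorial k : ℝ)

/-!
Expand `I₀` in its power series and integrate term by term, which is legitimate because every
term is nonnegative. This reduces the claim to the even moments of `K₀`. Exchanging the order of
integration gives `∫₀^∞ rⁿ K₀(br) dr = n!/bⁿ⁺¹ ∫₀^∞ sechⁿ⁺¹ t dt`, and the Gudermannian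
substitution `x = arctan (sinh t)` turns the last integral into the Wallis integral
`∫₀^{π/2} cosⁿ x dx`. For `n = 2m` the duplication formula turns this into
`4ᵐ Γ(m + 1/2)² / (2 b^{2m+1})`, which is the hypergeometric coefficient. The series converges
for `a < b` because log-convexity of `Γ` gives `Γ(k + 3/2)² ≤ (k + 1) k!²`.
-/

open Set
open scoped Nat

theorem integral_cos_pow_two_mul (m : ℕ) :
    ∫ x in (0:ℝ)..π/2, cos x ^ (2 * m) = √π * Gamma (m + 1/2) / (2 * m !) := by
  induction m with
  | zero =>
    rw [CharP.cast_eq_zero, zero_add, Gamma_one_half_eq, mul_self_sqrt pi_pos.le]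
    simp
  | succ m ih =>
    have hm : (m : ℝ) + 1/2 ≠ 0 := by positivity
    rw [mul_add, mul_one, integral_cos_pow, ih, cos_pi_div_two, sin_zero, zero_pow (by omega),
      Nat.cast_succ, add_right_comm (m : ℝ) 1, Gamma_add_one hm, Nat.factorial_succ]
    push_cast
    field_simp
    ring

theorem factorial_two_mul_eq_Gamma (m : ℕ) :
    ((2 * m)! : ℝ) = 4 ^ m * m ! * Gamma (m + 1/2) / √π := by
  induction m with
  | zero =>
    rw [Nat.cast_zero, zero_add, Gamma_one_half_eq]
    simp [(sqrt_pos.2 pi_pos).ne']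
  | succ m ih =>
    have hm : (m : ℝ) + 1/2 ≠ 0 := by positivity
    rw [mul_add, mul_one, Nat.factorial_succ, Nat.factorial_succ, Nat.cast_mul, Nat.cast_mul, ih,
      Nat.cast_succ m, add_right_comm (m : ℝ) 1, Gamma_add_one hm, Nat.factorial_succ]
    push_cast
    ring

theorem hasDerivAt_arctan_sinh (t : ℝ) :
    HasDerivAt (fun t => arctan (sinh t)) (cosh t)⁻¹ t := by
  refine ((hasDerivAt_arctan (sinh t)).comp t (hasDerivAt_sinh t)).congr_deriv ?_
  rw [← cosh_sq', div_mul_eq_mul_div, one_mul, sq, div_mul_cancel_right₀ (cosh_pos t).ne']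

theorem cos_arctan_sinh (t : ℝ) : cos (arctan (sinh t)) = (cosh t)⁻¹ := by
  rw [cos_arctan, ← cosh_sq', sqrt_sq (cosh_pos t).le, one_div]

theorem image_arctan_sinh_Ioi : (fun t => arctan (sinh t)) '' Ioi 0 = Ioo 0 (π / 2) := by
  ext y
  constructor
  · rintro ⟨t, ht, rfl⟩
    exact ⟨by simpa using arctan_strictMono (sinh_pos_iff.mpr ht), arctan_lt_pi_div_two _⟩
  · rintro ⟨hy0, hy2⟩
    refine ⟨arsinh (tan y), arsinh_pos_iff.mpr (tan_pos_of_pos_of_lt_pi_div_two hy0 hy2), ?_⟩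
    show arctan (sinh (arsinh (tan y))) = y
    rw [sinh_arsinh, arctan_tan (by linarith [pi_pos]) hy2]

theorem abs_inv_cosh_smul_cos_arctan_sinh_pow (n : ℕ) (t : ℝ) :
    |(cosh t)⁻¹| • cos (arctan (sinh t)) ^ n = (cosh t)⁻¹ ^ (n + 1) := by
  rw [cos_arctan_sinh, smul_eq_mul, abs_of_pos (by positivity), ← pow_succ']

section Gudermannian

variable (n : ℕ)

private theorem injOn_arctan_sinh : InjOn (fun t => arctan (sinh t)) (Ioi 0) :=
  (arctan_strictMono.comp sinh_strictMono).injective.injOn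

theorem integrableOn_inv_cosh_pow_succ :
    IntegrableOn (fun t => (cosh t)⁻¹ ^ (n + 1)) (Ioi 0) := by
  have hcos : IntegrableOn (fun x => cos x ^ n) ((fun t => arctan (sinh t)) '' Ioi 0) := by
    rw [image_arctan_sinh_Ioi]
    exact (continuous_cos.pow n).integrableOn_Icc.mono_set Ioo_subset_Icc_self
  simpa only [abs_inv_cosh_smul_cos_arctan_sinh_pow] using
    (integrableOn_image_iff_integrableOn_abs_deriv_smul measurableSet_Ioi
      (fun t _ => (hasDerivAt_arctan_sinh t).hasDerivWithinAt) injOn_arctan_sinh _).mp hcos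

theorem integral_inv_cosh_pow_succ :
    ∫ t in Ioi 0, (cosh t)⁻¹ ^ (n + 1) = ∫ x in (0:ℝ)..π/2, cos x ^ n := by
  rw [intervalIntegral.integral_of_le (by positivity), integral_Ioc_eq_integral_Ioo,
    ← image_arctan_sinh_Ioi, integral_image_eq_integral_abs_deriv_smul measurableSet_Ioi
      (fun t _ => (hasDerivAt_arctan_sinh t).hasDerivWithinAt) injOn_arctan_sinh]
  simp only [abs_inv_cosh_smul_cos_arctan_sinh_pow]

end Gudermannian

section ExpMoments

variable {c : ℝ} (hc : 0 < c) (n : ℕ)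
include hc

theorem integral_pow_mul_exp_neg_mul :
    ∫ r in Ioi 0, r ^ n * exp (-(c * r)) = n ! / c ^ (n + 1) := by
  have h := integral_rpow_mul_exp_neg_mul_Ioi (a := n + 1) (by positivity) hc
  rw [add_sub_cancel_right, Gamma_nat_eq_factorial, ← Nat.cast_succ, rpow_natCast] at h
  simpa [rpow_natCast, div_eq_inv_mul] using h

theorem integrableOn_pow_mul_exp_neg_mul :
    IntegrableOn (fun r => r ^ n * exp (-(c * r))) (Ioi 0) := by
  simpa only [rpow_natCast, rpow_one, neg_mul] using
    integrableOn_rpow_mul_exp_neg_mul_rpow (s := n) (p := 1)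
      (neg_one_lt_zero.trans_le n.cast_nonneg) one_pos hc

end ExpMoments

theorem K0_nonneg (x : ℝ) : 0 ≤ K0 x :=
  integral_nonneg fun _ => (exp_pos _).le

private theorem pow_mul_exp_neg_mul_cosh_comm (b t : ℝ) (n : ℕ) :
    (fun r => r ^ n * exp (-(b * r * cosh t))) = fun r => r ^ n * exp (-(b * cosh t * r)) :=
  funext fun r => by rw [mul_right_comm]

section K0Moments

variable {b : ℝ} (hb : 0 < b) (n : ℕ)
include hb

theorem integral_pow_mul_exp_neg_mul_cosh (t : ℝ) :
    ∫ r in Ioi 0, r ^ n * exp (-(b * r * cosh t)) = n ! / b ^ (n + 1) * (cosh t)⁻¹ ^ (n + 1) := by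
  rw [pow_mul_exp_neg_mul_cosh_comm, integral_pow_mul_exp_neg_mul (mul_pos hb (cosh_pos t)),
    mul_pow, inv_pow, div_mul_eq_div_div, div_eq_mul_inv]

theorem integrable_pow_mul_exp_neg_mul_cosh :
    Integrable (Function.uncurry fun t r => r ^ n * exp (-(b * r * cosh t)))
      ((volume.restrict (Ioi 0)).prod (volume.restrict (Ioi 0))) := by
  refine (integrable_prod_iff (by apply Continuous.aestronglyMeasurable; fun_prop)).2
    ⟨.of_forall fun t => ?_, ?_⟩
  · simp only [Function.uncurry_apply_pair]
    rw [pow_mul_exp_neg_mul_cosh_comm]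
    exact integrableOn_pow_mul_exp_neg_mul (mul_pos hb (cosh_pos t)) n
  · refine ((integrableOn_inv_cosh_pow_succ n).const_mul (n ! / b ^ (n + 1))).congr
      (.of_forall fun t => ?_)
    simp only [Function.uncurry_apply_pair]
    rw [← integral_pow_mul_exp_neg_mul_cosh hb n t]
    refine setIntegral_congr_fun measurableSet_Ioi fun r hr => ?_
    exact (norm_of_nonneg (mul_nonneg (pow_nonneg (le_of_lt hr) _) (exp_pos _).le)).symm

theorem integrableOn_pow_mul_K0 : IntegrableOn (fun r => r ^ n * K0 (b * r)) (Ioi 0) := by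
  simpa only [IntegrableOn, K0, Function.uncurry_apply_pair, ← integral_const_mul] using
    (integrable_pow_mul_exp_neg_mul_cosh hb n).integral_prod_right

theorem integral_pow_mul_K0 :
    ∫ r in Ioi 0, r ^ n * K0 (b * r) = n ! / b ^ (n + 1) * ∫ x in (0:ℝ)..π/2, cos x ^ n := by
  simp only [K0, ← integral_const_mul]
  rw [← integral_integral_swap (integrable_pow_mul_exp_neg_mul_cosh hb n)]
  simp only [integral_pow_mul_exp_neg_mul_cosh hb n]
  rw [integral_const_mul, integral_inv_cosh_pow_succ]

end K0Moments

theorem integral_pow_two_mul_mul_K0 {b : ℝ} (hb : 0 < b) (m : ℕ) :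
    ∫ r in Ioi 0, r ^ (2 * m) * K0 (b * r)
      = 4 ^ m * Gamma (m + 1/2) ^ 2 / (2 * b ^ (2 * m + 1)) := by
  rw [integral_pow_mul_K0 hb, integral_cos_pow_two_mul, factorial_two_mul_eq_Gamma]
  have := (sqrt_pos.2 pi_pos).ne'
  have := (Nat.factorial_pos m).ne'
  field_simp

theorem integral_tsum_of_nonneg {α ι : Type*} [MeasurableSpace α] [Countable ι] {μ : Measure α}
    {F : ι → α → ℝ} (hF_nonneg : ∀ i a, 0 ≤ F i a) (hF_int : ∀ i, Integrable (F i) μ)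
    (hF_sum : Summable fun i => ∫ a, F i a ∂μ) :
    ∫ a, ∑' i, F i a ∂μ = ∑' i, ∫ a, F i a ∂μ := by
  refine (integral_tsum_of_summable_integral_norm hF_int ?_).symm
  simpa only [norm_of_nonneg (hF_nonneg _ _)] using hF_sum

theorem sq_mul_I0_mul_eq_tsum (a r y : ℝ) :
    r ^ 2 * I0 (a * r) * y
      = ∑' k : ℕ, (a ^ 2 / 4) ^ k / (k ! : ℝ) ^ 2 * (r ^ (2 * (k + 1)) * y) := by
  rw [I0, mul_comm (r ^ 2), mul_assoc, ← tsum_mul_right]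
  exact tsum_congr fun k => by ring

theorem Gamma_three_halves_sq : Gamma (3/2) ^ 2 = π / 4 := by
  rw [show (3/2 : ℝ) = 1/2 + 1 by norm_num, Gamma_add_one (by norm_num), Gamma_one_half_eq,
    mul_pow, sq_sqrt pi_pos.le]
  ring

theorem twoF1_three_halves_three_halves_one (x : ℝ) :
    twoF1 (3/2) (3/2) 1 x = 4 / π * ∑' k : ℕ, Gamma (k + 3/2) ^ 2 / (k ! : ℝ) ^ 2 * x ^ k := by
  rw [twoF1, Gamma_one, ← sq, Gamma_three_halves_sq]
  congr 1
  · field_simp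
  · exact tsum_congr fun k => by rw [Gamma_nat_eq_factorial]; ring

theorem Gamma_nat_add_three_halves_sq_le (k : ℕ) :
    Gamma (k + 3/2) ^ 2 ≤ (k + 1) * (k ! : ℝ) ^ 2 := by
  have h := Gamma_mul_add_mul_le_rpow_Gamma_mul_rpow_Gamma (s := k + 1) (t := (k + 1 : ℕ) + 1)
    (by positivity) (by positivity) one_half_pos one_half_pos (add_halves 1)
  rw [← sqrt_eq_rpow, ← sqrt_eq_rpow, ← sqrt_mul (Gamma_pos_of_pos (by positivity)).le,
    Gamma_nat_eq_factorial, Gamma_nat_eq_factorial, Nat.factorial_succ] at h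
  calc Gamma (k + 3/2) ^ 2 = Gamma (1/2 * (k + 1) + 1/2 * ((k + 1 : ℕ) + 1)) ^ 2 := by
        push_cast; ring_nf
    _ ≤ _ := pow_le_pow_left₀ (Gamma_pos_of_pos (by positivity)).le h 2
    _ = (k + 1) * (k ! : ℝ) ^ 2 := by
      rw [sq_sqrt (by positivity)]
      push_cast
      ring

theorem summable_Gamma_nat_add_three_halves_sq_mul_pow {x : ℝ} (hx0 : 0 ≤ x) (hx1 : x < 1) :
    Summable fun k : ℕ => Gamma (k + 3/2) ^ 2 / (k ! : ℝ) ^ 2 * x ^ k := by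
  have hx : ‖x‖ < 1 := by rwa [norm_of_nonneg hx0]
  have hmajorant : Summable fun k : ℕ => ((k : ℝ) + 1) * x ^ k := by
    simpa only [pow_one, add_mul, one_mul] using
      (summable_pow_mul_geometric_of_norm_lt_one 1 hx).add (summable_geometric_of_lt_one hx0 hx1)
  refine hmajorant.of_nonneg_of_le (fun k => by positivity) fun k => ?_
  gcongr
  rw [div_le_iff₀ (by positivity)]
  exact Gamma_nat_add_three_halves_sq_le k

theorem stmt14 (a b : ℝ) (ha : 0 ≤ a) (hb : a < b) :
    ∫ r in Set.Ioi (0:ℝ), r^2 * I0 (a * r) * K0 (b * r)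
      = (π / 2) * b⁻¹^3 * twoF1 (3/2) (3/2) 1 (a^2 / b^2) := by
  have hb0 : 0 < b := ha.trans_lt hb
  have hx : a ^ 2 / b ^ 2 < 1 :=
    (div_lt_one (by positivity)).2 (pow_lt_pow_left₀ hb ha two_ne_zero)
  set F : ℕ → ℝ → ℝ := fun k r =>
    (a ^ 2 / 4) ^ k / (k ! : ℝ) ^ 2 * (r ^ (2 * (k + 1)) * K0 (b * r))
  have hF_nonneg (k : ℕ) (r : ℝ) : 0 ≤ F k r :=
    mul_nonneg (by positivity) (mul_nonneg ((even_two_mul _).pow_nonneg r) (K0_nonneg _))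
  have hF (k : ℕ) : ∫ r in Ioi 0, F k r
      = 2 / b ^ 3 * (Gamma (k + 3/2) ^ 2 / (k ! : ℝ) ^ 2 * (a ^ 2 / b ^ 2) ^ k) := by
    rw [integral_const_mul, integral_pow_two_mul_mul_K0 hb0, Nat.cast_succ, add_assoc,
      show (1 + 1/2 : ℝ) = 3/2 by norm_num, div_pow, div_pow, ← pow_mul, ← pow_mul,
      show 2 * (k + 1) + 1 = 2 * k + 3 by ring, pow_add b, pow_succ]
    field_simp
    ring
  calc _ = ∫ r in Ioi 0, ∑' k, F k r := by simp only [sq_mul_I0_mul_eq_tsum, F]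
    _ = ∑' k, ∫ r in Ioi 0, F k r :=
      integral_tsum_of_nonneg hF_nonneg (fun k => (integrableOn_pow_mul_K0 hb0 _).const_mul _)
        (by simpa only [hF] using
          (summable_Gamma_nat_add_three_halves_sq_mul_pow (by positivity) hx).mul_left _)
    _ = _ := by
      simp only [hF, tsum_mul_left, twoF1_three_halves_three_halves_one]
      field_simp
      ring
end
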